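/- arXiv:1211.5218 — 2 statements merged into one kernel-verified Lean document; each statement's English description precedes it below -/
import Mathlib

section
/- Suppose that for every finite set Θ ⊂ ℝⁿ of frequencies, every ball Q, and every φ in the span of (e^{iξ·x})_{ξ∈Θ}, the inequality ‖φ‖_{L^∞(Q)} ≤ C (card Θ)^{1/2} (⨍_{3Q} |φ|² dx)^{1/2} holds. Then for every even integer p = 2k, every such φ satisfies ‖φ‖_{L^∞(Q)} ≤ C^{1/k} (card Θ^k)^{1/p} (⨍_{3Q} |φ|^p dx)^{1/p}, where Θ^k is the set of k-fold sums of elements of Θ. -/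
open MeasureTheory Metric
open scoped RealInnerProductSpace ENNReal

/-- If the multi-frequency local `L²`–`L^∞` estimate of Lemma 1 holds (with constant `C`)
for all finite frequency sets and all balls, then for every even integer `p = 2k` one has
`‖φ‖_{L^∞(Q)} ≤ C^{1/k} (card Θ^k)^{1/p} (⨍_{3Q} |φ|^p)^{1/p}` for every `φ` in the span of
the exponentials with frequencies in `Θ`, where `Θ^k` is the set of `k`-fold sums. -/
theorem stmt4 (n : ℕ) [DecidableEq (EuclideanSpace ℝ (Fin n))] (C : ℝ) (hC : 0 < C)
    (H : ∀ (Θ : Finset (EuclideanSpace ℝ (Fin n))) (c : EuclideanSpace ℝ (Fin n) → ℂ)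
      (z : EuclideanSpace ℝ (Fin n)) (r : ℝ), 0 < r → ∀ x ∈ ball z r,
      ‖∑ ξ ∈ Θ, c ξ * Complex.exp (Complex.I * (⟪ξ, x⟫ : ℝ))‖ ≤
        C * (Θ.card : ℝ) ^ ((1:ℝ)/2) *
          (⨍ y in ball z (3*r),
            ‖∑ ξ ∈ Θ, c ξ * Complex.exp (Complex.I * (⟪ξ, y⟫ : ℝ))‖ ^ 2 ∂volume) ^ ((1:ℝ)/2)) :
    ∀ (k : ℕ), 0 < k →
    ∀ (Θ : Finset (EuclideanSpace ℝ (Fin n))) (c : EuclideanSpace ℝ (Fin n) → ℂ)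
      (z : EuclideanSpace ℝ (Fin n)) (r : ℝ), 0 < r → ∀ x ∈ ball z r,
      ‖∑ ξ ∈ Θ, c ξ * Complex.exp (Complex.I * (⟪ξ, x⟫ : ℝ))‖ ≤
        C ^ ((1:ℝ)/k) *
          ((((Fintype.piFinset fun _ : Fin k => Θ).image fun g => ∑ i, g i).card : ℝ))
            ^ ((1:ℝ)/(2*k)) *
          (⨍ y in ball z (3*r),
            ‖∑ ξ ∈ Θ, c ξ * Complex.exp (Complex.I * (⟪ξ, y⟫ : ℝ))‖ ^ (2*k) ∂volume)
            ^ ((1:ℝ)/(2*k)) := by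
  intro k hk Θ c z r hr x hx
  set φ : EuclideanSpace ℝ (Fin n) → ℂ :=
    fun y => ∑ ξ ∈ Θ, c ξ * Complex.exp (Complex.I * (⟪ξ, y⟫ : ℝ)) with hφ
  set Θ' := (Fintype.piFinset fun _ : Fin k => Θ).image fun g => ∑ i, g i with hΘ'
  set c' : EuclideanSpace ℝ (Fin n) → ℂ := fun η =>
    ∑ g ∈ (Fintype.piFinset fun _ : Fin k => Θ).filter (fun g => ∑ i, g i = η),
      ∏ i, c (g i) with hc'
  have key : ∀ y : EuclideanSpace ℝ (Fin n),
      ∑ η ∈ Θ', c' η * Complex.exp (Complex.I * (⟪η, y⟫ : ℝ)) = (φ y) ^ k := by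
    intro y
    have expand : (φ y) ^ k = ∑ g ∈ Fintype.piFinset (fun _ : Fin k => Θ),
        (∏ i, c (g i)) * Complex.exp (Complex.I * ((⟪∑ i, g i, y⟫ : ℝ) : ℂ)) := by
      have h1 : (φ y) ^ k = ∏ _i : Fin k, φ y := by simp
      rw [h1, hφ]
      rw [Finset.prod_univ_sum]
      refine Finset.sum_congr rfl fun g _ => ?_
      rw [Finset.prod_mul_distrib, ← Complex.exp_sum]
      congr 1
      rw [← Finset.mul_sum]
      congr 1
      rw [sum_inner]
      push_cast
      rfl
    rw [expand, ← Finset.sum_fiberwise_of_maps_to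
      (g := fun g : Fin k → EuclideanSpace ℝ (Fin n) => ∑ i, g i)
      (t := Θ') (fun g hg => Finset.mem_image_of_mem _ hg)]
    refine Finset.sum_congr rfl fun η _ => ?_
    rw [hc', Finset.sum_mul]
    refine Finset.sum_congr rfl fun g hg => ?_
    rw [(Finset.mem_filter.mp hg).2]
  have h2 := H Θ' c' z r hr x hx
  simp only [key] at h2
  rw [norm_pow] at h2
  have hint : ∀ y : EuclideanSpace ℝ (Fin n), ‖φ y ^ k‖ ^ 2 = ‖φ y‖ ^ (2 * k) := by
    intro y; rw [norm_pow, ← pow_mul, mul_comm]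
  simp only [hint] at h2
  set A : ℝ := ⨍ y in ball z (3*r), ‖φ y‖ ^ (2*k) ∂volume with hA
  have hA0 : 0 ≤ A := by
    rw [hA]
    exact integral_nonneg fun y => by positivity
  have hN0 : (0:ℝ) ≤ (Θ'.card : ℝ) := by positivity
  have hk0 : (k:ℝ) ≠ 0 := Nat.cast_ne_zero.mpr hk.ne'
  have h3 : (‖φ x‖ ^ k) ^ ((1:ℝ)/k) ≤
      (C * (Θ'.card : ℝ) ^ ((1:ℝ)/2) * A ^ ((1:ℝ)/2)) ^ ((1:ℝ)/k) :=
    Real.rpow_le_rpow (by positivity) h2 (by positivity)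
  have hL : (‖φ x‖ ^ k) ^ ((1:ℝ)/k) = ‖φ x‖ := by
    rw [← Real.rpow_natCast ‖φ x‖ k, ← Real.rpow_mul (norm_nonneg _)]
    rw [mul_one_div, div_self hk0, Real.rpow_one]
  rw [hL] at h3
  refine h3.trans_eq ?_
  rw [Real.mul_rpow (by positivity) (by positivity),
    Real.mul_rpow (le_of_lt hC) (by positivity),
    ← Real.rpow_mul hN0, ← Real.rpow_mul hA0]
  have he : (1:ℝ)/2 * (1/k) = 1/(2*k) := by field_simp
  rw [he]
end

section
/- Let K ∈ L^{s'}(ℝⁿ) (1 ≤ s ≤ 2, s' the conjugate exponent) satisfy ‖(1 + 2^j|·|)^M K‖_{L^{s'}} ≤ C 2^{j/s} for some integer M > n and some j ≤ 0. Then for every locally integrable f and every x ∈ ℝⁿ, |(K ∗ f)(x)| ≤ C' 2^{−j(n−1)/s} M_s f(x), where M_s f := (M(|f|^s))^{1/s} and M is the Hardy–Littlewood maximal function. -/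
/-!
Write `K (x - y) f y = (w K) (x - y) · w (x - y)⁻¹ f y` with `w z = (1 + 2 ^ j ‖z‖) ^ M` and apply
Hölder with exponents `s'`, `s`; by translation invariance the first factor is the hypothesis on
`K`. As `w ≥ 1` and `s ≥ 1`, the `s`-th power of the second factor is at most
`∫ w (x - y)⁻¹ |f y| ^ s dy`. Taking for `k` the least natural number with
`2 ^ j ‖x - y‖ < 2 ^ k` gives `2 ^ k ≤ 2 (1 + 2 ^ j ‖x - y‖)`, hence
`w (x - y)⁻¹ ≤ Σ_k (2 / 2 ^ k) ^ M 1_{B(x, 2 ^ (k - j))}(y)`.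
Each ball contributes at most its volume `≈ 2 ^ ((k - j) n)` times the maximal function of
`|f| ^ s` at `x`, and the resulting series converges because `M > n`, with sum `≈ 2 ^ (-j n)`.
Taking `s`-th roots, `2 ^ (j / s) 2 ^ (-j n / s) = 2 ^ (-j (n - 1) / s)`.
-/

open MeasureTheory Metric Module
open scoped ENNReal

/-- The `s`-maximal function `M_s f = (M(|f|^s))^{1/s}`, where `M` is the
Hardy–Littlewood maximal function (sup of averages over balls containing `x`). -/
noncomputable def maxFnS {n : ℕ} (s : ℝ) (f : EuclideanSpace ℝ (Fin n) → ℂ)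
    (x : EuclideanSpace ℝ (Fin n)) : ℝ≥0∞ :=
  (⨆ (c : EuclideanSpace ℝ (Fin n)) (r : ℝ) (_ : 0 < r) (_ : x ∈ ball c r),
    ⨍⁻ y in ball c r, (‖f y‖₊ : ℝ≥0∞) ^ s ∂volume) ^ (1 / s)

section Maximal

variable {X : Type*} [PseudoMetricSpace X] [MeasurableSpace X] (μ : Measure X)

noncomputable def hardyLittlewoodMaximal (g : X → ℝ≥0∞) (x : X) : ℝ≥0∞ :=
  ⨆ (c : X) (r : ℝ) (_ : 0 < r) (_ : x ∈ ball c r), ⨍⁻ y in ball c r, g y ∂μ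

theorem setLIntegral_ball_le_measure_mul_hardyLittlewoodMaximal (g : X → ℝ≥0∞) (x : X) {r : ℝ}
    (hr : 0 < r) (hball : μ (ball x r) ≠ ∞) :
    ∫⁻ y in ball x r, g y ∂μ ≤ μ (ball x r) * hardyLittlewoodMaximal μ g x := by
  rw [← measure_mul_setLAverage _ hball]
  gcongr
  exact le_iSup₂_of_le x r (le_iSup₂_of_le hr (mem_ball_self hr) le_rfl)

end Maximal

theorem maxFnS_eq_hardyLittlewoodMaximal {n : ℕ} (s : ℝ) (f : EuclideanSpace ℝ (Fin n) → ℂ)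
    (x : EuclideanSpace ℝ (Fin n)) :
    maxFnS s f x = hardyLittlewoodMaximal volume (fun y => ‖f y‖ₑ ^ s) x ^ (1 / s) :=
  rfl

theorem exists_lt_two_pow_le_two_mul_one_add {t : ℝ} (ht : 0 ≤ t) :
    ∃ k : ℕ, t < 2 ^ k ∧ (2 : ℝ) ^ k ≤ 2 * (1 + t) := by
  classical
  have hex : ∃ k : ℕ, t < 2 ^ k := pow_unbounded_of_one_lt t one_lt_two
  refine ⟨Nat.find hex, Nat.find_spec hex, ?_⟩
  rcases h : Nat.find hex with _ | m
  · norm_num; linarith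
  · have : (2 : ℝ) ^ m ≤ t := not_lt.1 (Nat.find_min hex (by omega))
    rw [pow_succ]; linarith

theorem inv_one_add_pow_le_two_div_pow {t : ℝ} {k : ℕ} (hk : (2 : ℝ) ^ k ≤ 2 * (1 + t)) (M : ℕ) :
    ((1 + t) ^ M)⁻¹ ≤ (2 / 2 ^ k) ^ M :=
  calc ((1 + t) ^ M)⁻¹ ≤ ((2 ^ k / 2) ^ M)⁻¹ :=
        inv_anti₀ (by positivity) (pow_le_pow_left₀ (by positivity) (by linarith) M)
    _ = (2 / 2 ^ k) ^ M := by rw [← inv_pow, inv_div]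

section Decay

variable {E : Type*} [NormedAddCommGroup E]

theorem inv_ofReal_one_add_mul_norm_pow_le_tsum (M : ℕ) {δ : ℝ} (hδ : 0 < δ) (x y : E) :
    (ENNReal.ofReal ((1 + δ * ‖x - y‖) ^ M))⁻¹ ≤
      ∑' k : ℕ, (ball x (2 ^ k / δ)).indicator (fun _ => ENNReal.ofReal ((2 / 2 ^ k) ^ M)) y := by
  obtain ⟨k, hlt, hle⟩ := exists_lt_two_pow_le_two_mul_one_add (t := δ * ‖x - y‖) (by positivity)
  refine le_trans ?_ (ENNReal.le_tsum k)
  have hy : y ∈ ball x (2 ^ k / δ) := by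
    rw [mem_ball, dist_comm, dist_eq_norm, lt_div_iff₀ hδ]; linarith
  rw [Set.indicator_of_mem hy, ← ENNReal.ofReal_inv_of_pos (by positivity)]
  exact ENNReal.ofReal_le_ofReal (inv_one_add_pow_le_two_div_pow hle M)

variable [NormedSpace ℝ E]

theorem two_pow_finrank_div_two_pow_lt_one {M : ℕ} (hM : finrank ℝ E < M) :
    (2 : ℝ) ^ finrank ℝ E / 2 ^ M < 1 := by
  rw [div_lt_one (by positivity)]
  exact pow_lt_pow_right₀ one_lt_two hM

variable [FiniteDimensional ℝ E] [MeasurableSpace E] (μ : Measure E) [μ.IsAddHaarMeasure]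

noncomputable def decayConstant (M : ℕ) : ℝ :=
  2 ^ M * μ.real (ball 0 1) * (1 - 2 ^ finrank ℝ E / 2 ^ M)⁻¹

theorem decayConstant_pos {M : ℕ} (hM : finrank ℝ E < M) : 0 < decayConstant μ M := by
  have hV : 0 < μ.real (ball 0 1) :=
    ENNReal.toReal_pos (measure_ball_pos μ 0 one_pos).ne' measure_ball_lt_top.ne
  have := sub_pos.2 (two_pow_finrank_div_two_pow_lt_one hM)
  unfold decayConstant
  positivity

variable [BorelSpace E]

theorem lintegral_inv_one_add_mul_norm_pow_mul_le {M : ℕ} (hM : finrank ℝ E < M) {δ : ℝ}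
    (hδ : 0 < δ) (x : E) {g : E → ℝ≥0∞} (hg : AEMeasurable g μ) :
    ∫⁻ y, (ENNReal.ofReal ((1 + δ * ‖x - y‖) ^ M))⁻¹ * g y ∂μ ≤
      ENNReal.ofReal (decayConstant μ M / δ ^ finrank ℝ E) * hardyLittlewoodMaximal μ g x := by
  set d := finrank ℝ E with hd
  set q : ℝ := 2 ^ d / 2 ^ M
  have hq1 : q < 1 := two_pow_finrank_div_two_pow_lt_one hM
  have hterm (k : ℕ) : ENNReal.ofReal ((2 / 2 ^ k) ^ M) * μ (ball x (2 ^ k / δ)) =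
      ENNReal.ofReal (2 ^ M * μ.real (ball 0 1) / δ ^ d * q ^ k) := by
    rw [Measure.addHaar_ball_of_pos μ x (by positivity),
      ← ofReal_measureReal measure_ball_lt_top.ne, ← ENNReal.ofReal_mul (by positivity),
      ← ENNReal.ofReal_mul (by positivity), ← hd]
    congr 1
    rw [div_pow (2 ^ d), ← pow_mul, ← pow_mul, mul_comm d, mul_comm M, pow_mul, pow_mul, div_pow,
      div_pow]
    field_simp
  calc ∫⁻ y, (ENNReal.ofReal ((1 + δ * ‖x - y‖) ^ M))⁻¹ * g y ∂μ
      ≤ ∫⁻ y, ∑' k : ℕ, (ball x (2 ^ k / δ)).indicator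
          (fun y => ENNReal.ofReal ((2 / 2 ^ k) ^ M) * g y) y ∂μ := by
        gcongr with y
        simp only [Set.indicator_mul_left, ENNReal.tsum_mul_right]
        gcongr
        exact inv_ofReal_one_add_mul_norm_pow_le_tsum M hδ x y
    _ = ∑' k : ℕ, ENNReal.ofReal ((2 / 2 ^ k) ^ M) * ∫⁻ y in ball x (2 ^ k / δ), g y ∂μ := by
        rw [lintegral_tsum fun k => (hg.const_mul _).indicator measurableSet_ball]
        congr with k
        rw [lintegral_indicator measurableSet_ball, lintegral_const_mul' _ _ ENNReal.ofReal_ne_top]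
    _ ≤ ∑' k : ℕ, ENNReal.ofReal (2 ^ M * μ.real (ball 0 1) / δ ^ d * q ^ k) *
          hardyLittlewoodMaximal μ g x := by
        refine ENNReal.tsum_le_tsum fun k => ?_
        rw [← hterm, mul_assoc]
        gcongr
        exact setLIntegral_ball_le_measure_mul_hardyLittlewoodMaximal μ g x (by positivity)
          measure_ball_lt_top.ne
    _ = _ := by
        rw [ENNReal.tsum_mul_right, ← ENNReal.ofReal_tsum_of_nonneg (fun k => by positivity)
          ((summable_geometric_of_lt_one (by positivity) hq1).mul_left _), tsum_mul_left,
          tsum_geometric_of_lt_one (by positivity) hq1]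
        congr 2
        unfold decayConstant
        ring

end Decay

section Holder

variable {G α 𝕜 : Type*} [RCLike 𝕜]

theorem enorm_integral_mul_le_eLpNorm_smul_mul_eLpNorm_inv_smul [AddCommGroup G]
    [MeasurableSpace G] [MeasurableAdd₂ G] [MeasurableNeg G] (μ : Measure G)
    [μ.IsAddLeftInvariant] [μ.IsNegInvariant] {p q : ℝ≥0∞} [p.HolderConjugate q]
    {w : G → ℝ} (hw : Measurable w) (hw0 : ∀ z, w z ≠ 0) {K f : G → 𝕜}
    (hK : AEStronglyMeasurable K μ) (hf : AEStronglyMeasurable f μ) (x : G) :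
    ‖∫ y, K (x - y) * f y ∂μ‖ₑ ≤
      eLpNorm (fun z => w z • K z) p μ * eLpNorm (fun y => (w (x - y))⁻¹ • f y) q μ := by
  have hsub := Measure.measurePreserving_sub_left μ x
  have hwK : AEStronglyMeasurable (fun z => w z • K z) μ := hw.aestronglyMeasurable.smul hK
  have hΦ : AEStronglyMeasurable (fun y => w (x - y) • K (x - y)) μ :=
    hwK.comp_measurePreserving hsub
  have hΨ : AEStronglyMeasurable (fun y => (w (x - y))⁻¹ • f y) μ :=
    (hw.comp hsub.measurable).inv.aestronglyMeasurable.smul hf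
  calc ‖∫ y, K (x - y) * f y ∂μ‖ₑ ≤ ∫⁻ y, ‖K (x - y) * f y‖ₑ ∂μ :=
        enorm_integral_le_lintegral_enorm _
    _ = eLpNorm (fun y => (w (x - y) • K (x - y)) * ((w (x - y))⁻¹ • f y)) 1 μ := by
        rw [eLpNorm_one_eq_lintegral_enorm]
        congr with y
        rw [smul_mul_smul_comm, mul_inv_cancel₀ (hw0 _), one_smul]
    _ ≤ eLpNorm (fun y => w (x - y) • K (x - y)) p μ *
          eLpNorm (fun y => (w (x - y))⁻¹ • f y) q μ := by
        simpa using eLpNorm_le_eLpNorm_mul_eLpNorm_of_nnnorm hΦ hΨ (· * ·) 1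
          (.of_forall fun y => by rw [one_mul]; exact (nnnorm_mul _ _).le)
    _ = _ := by rw [← eLpNorm_comp_measurePreserving hwK hsub]; rfl

theorem eLpNorm_inv_smul_le_lintegral [MeasurableSpace α] (μ : Measure α) {v : α → ℝ}
    (hv : ∀ y, 1 ≤ v y) (f : α → 𝕜) {s : ℝ} (hs : 1 ≤ s) :
    eLpNorm (fun y => (v y)⁻¹ • f y) (ENNReal.ofReal s) μ ≤
      (∫⁻ y, (ENNReal.ofReal (v y))⁻¹ * ‖f y‖ₑ ^ s ∂μ) ^ (1 / s) := by
  have hs0 : 0 < s := by linarith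
  rw [eLpNorm_eq_lintegral_rpow_enorm_toReal (by simpa using hs0) ENNReal.ofReal_ne_top,
    ENNReal.toReal_ofReal hs0.le]
  gcongr with y
  have hv0 : 0 < v y := by linarith [hv y]
  rw [enorm_smul, ENNReal.mul_rpow_of_nonneg _ _ hs0.le, Real.enorm_eq_ofReal (by positivity),
    ENNReal.ofReal_inv_of_pos hv0]
  gcongr
  calc (ENNReal.ofReal (v y))⁻¹ ^ s ≤ (ENNReal.ofReal (v y))⁻¹ ^ (1 : ℝ) :=
        ENNReal.rpow_le_rpow_of_exponent_ge
          (ENNReal.inv_le_one.2 (ENNReal.one_le_ofReal.2 (hv y))) hs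
    _ = _ := ENNReal.rpow_one _

end Holder

theorem rpow_div_mul_div_rpow_pow_rpow {b : ℝ} (hb : 0 < b) {A : ℝ} (hA : 0 ≤ A) (j s : ℝ)
    (n : ℕ) :
    b ^ (j / s) * (A / (b ^ j) ^ n) ^ (1 / s) = A ^ (1 / s) * b ^ (-j * ((n : ℝ) - 1) / s) := by
  have hpow : (b ^ j) ^ n = b ^ (j * n) := by
    rw [← Real.rpow_natCast, ← Real.rpow_mul hb.le]
  have hsplit : b ^ (-j * ((n : ℝ) - 1) / s) = b ^ (j / s) / b ^ (j * n * (1 / s)) := by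
    rw [← Real.rpow_sub hb]; ring_nf
  rw [hpow, Real.div_rpow hA (by positivity), ← Real.rpow_mul hb.le, hsplit]
  field_simp

theorem stmt10_general (n M : ℕ) (hM : n < M) (s : ℝ) (hs1 : 1 ≤ s)
    (s' : ℝ≥0∞) (hs' : 1 / ENNReal.ofReal s + 1 / s' = 1) (C : ℝ) (hC : 0 < C) :
    ∃ C' > 0, ∀ j : ℝ, j ≤ 0 →
      ∀ K : EuclideanSpace ℝ (Fin n) → ℂ, Measurable K →
      eLpNorm (fun x => ((1 + 2 ^ j * ‖x‖) ^ M : ℝ) • K x) s' volume ≤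
        ENNReal.ofReal (C * 2 ^ (j / s)) →
      ∀ f : EuclideanSpace ℝ (Fin n) → ℂ, LocallyIntegrable f volume →
      ∀ x : EuclideanSpace ℝ (Fin n),
        (‖∫ y, K (x - y) * f y‖₊ : ℝ≥0∞) ≤
          ENNReal.ofReal (C' * 2 ^ (-j * ((n:ℝ) - 1) / s)) * maxFnS s f x := by
  have : s'.HolderConjugate (ENNReal.ofReal s) :=
    ENNReal.holderConjugate_iff.2 (by simpa [add_comm] using hs')
  have hA := decayConstant_pos (volume : Measure (EuclideanSpace ℝ (Fin n))) (M := M)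
    (by simpa using hM)
  refine ⟨C * decayConstant volume M ^ (1 / s), by positivity, fun j _ K hK hKn f hf x => ?_⟩
  set w : EuclideanSpace ℝ (Fin n) → ℝ := fun z => (1 + 2 ^ j * ‖z‖) ^ M
  have hw1 (z) : 1 ≤ w z := one_le_pow₀ (by simp only [le_add_iff_nonneg_right]; positivity)
  calc (‖∫ y, K (x - y) * f y‖₊ : ℝ≥0∞)
      ≤ eLpNorm (fun z => w z • K z) s' volume *
          eLpNorm (fun y => (w (x - y))⁻¹ • f y) (ENNReal.ofReal s) volume :=
        enorm_integral_mul_le_eLpNorm_smul_mul_eLpNorm_inv_smul volume (by fun_prop)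
          (fun z => (zero_lt_one.trans_le (hw1 z)).ne') hK.aestronglyMeasurable
          hf.aestronglyMeasurable x
    _ ≤ ENNReal.ofReal (C * 2 ^ (j / s)) * (ENNReal.ofReal (decayConstant volume M / (2 ^ j) ^ n) *
          hardyLittlewoodMaximal volume (fun y => ‖f y‖ₑ ^ s) x) ^ (1 / s) := by
        gcongr
        refine (eLpNorm_inv_smul_le_lintegral volume (fun y => hw1 (x - y)) f hs1).trans ?_
        gcongr
        simpa using lintegral_inv_one_add_mul_norm_pow_mul_le volume (by simpa using hM)
          (by positivity) x (hf.aestronglyMeasurable.enorm.pow_const s)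
    _ = _ := by
        rw [ENNReal.mul_rpow_of_nonneg _ _ (by positivity),
          ENNReal.ofReal_rpow_of_nonneg (by positivity) (by positivity), ← mul_assoc,
          ← ENNReal.ofReal_mul (by positivity), mul_assoc C,
          rpow_div_mul_div_rpow_pow_rpow two_pos hA.le, ← mul_assoc,
          maxFnS_eq_hardyLittlewoodMaximal]

/-- If `‖(1+2^j|·|)^M K‖_{L^{s'}} ≤ C 2^{j/s}` with `M > n`, `1 ≤ s ≤ 2`, `s'` the conjugate
exponent and `j ≤ 0`, then `|(K ∗ f)(x)| ≤ C' 2^{-j(n-1)/s} M_s f(x)` pointwise. -/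
theorem stmt10 (n M : ℕ) (hM : n < M) (s : ℝ) (hs1 : 1 ≤ s) (hs2 : s ≤ 2)
    (s' : ℝ≥0∞) (hs' : 1 / ENNReal.ofReal s + 1 / s' = 1) (C : ℝ) (hC : 0 < C) :
    ∃ C' > 0, ∀ j : ℝ, j ≤ 0 →
      ∀ K : EuclideanSpace ℝ (Fin n) → ℂ, Measurable K →
      eLpNorm (fun x => ((1 + 2 ^ j * ‖x‖) ^ M : ℝ) • K x) s' volume ≤
        ENNReal.ofReal (C * 2 ^ (j / s)) →
      ∀ f : EuclideanSpace ℝ (Fin n) → ℂ, LocallyIntegrable f volume →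
      ∀ x : EuclideanSpace ℝ (Fin n),
        (‖∫ y, K (x - y) * f y‖₊ : ℝ≥0∞) ≤
          ENNReal.ofReal (C' * 2 ^ (-j * ((n:ℝ) - 1) / s)) * maxFnS s f x :=
  stmt10_general n M hM s hs1 s' hs' C hC
end
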